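/- Let K be a nonempty convex cone in a normed space V and g ∈ V*. If g belongs to the interior of the barrier cone B(K), then ⟨g, y⟩ < 0 for every y ∈ K \ {0}. -/

import Mathlib

/-!
On a cone, a functional that is bounded above must be nonpositive, since its values on the ray
`{c • y | c ≥ 0}` are `c * h y`. If `g` lies in the interior of the barrier cone, so does
`g + (ε/2) • f` for a norming functional `f` of `y` (`‖f‖ ≤ 1`, `f y = ‖y‖`), whence
`g y + (ε/2) ‖y‖ ≤ 0`.
-/

section

variable {V : Type*} [NormedAddCommGroup V] [NormedSpace ℝ V]

def barrierCone (K : Set V) : Set (V →L[ℝ] ℝ) :=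
  {h | ∃ M : ℝ, ∀ v ∈ K, h v ≤ M}

theorem apply_nonpos_of_mem_barrierCone {K : Set V}
    (hcone : ∀ (c : ℝ), 0 ≤ c → ∀ v ∈ K, c • v ∈ K)
    {h : V →L[ℝ] ℝ} (hh : h ∈ barrierCone K) {y : V} (hy : y ∈ K) : h y ≤ 0 := by
  obtain ⟨M, hM⟩ := hh
  by_contra! hpos
  obtain ⟨n, hn⟩ := exists_nat_gt (M / h y)
  have hbound : (n : ℝ) * h y ≤ M := by
    simpa only [map_smul, smul_eq_mul] using hM _ (hcone n n.cast_nonneg y hy)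
  have : M < n * h y := (div_lt_iff₀ hpos).mp hn
  linarith

theorem exists_apply_le_neg_mul_norm_of_mem_interior_barrierCone {K : Set V}
    (hcone : ∀ (c : ℝ), 0 ≤ c → ∀ v ∈ K, c • v ∈ K)
    {g : V →L[ℝ] ℝ} (hg : g ∈ interior (barrierCone K)) :
    ∃ ε > 0, ∀ y ∈ K, g y ≤ -(ε * ‖y‖) := by
  obtain ⟨ε, hε, hball⟩ := Metric.mem_nhds_iff.mp (mem_interior_iff_mem_nhds.mp hg)
  refine ⟨ε / 2, half_pos hε, fun y hy => ?_⟩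
  obtain ⟨f, hf_norm, hfy⟩ := exists_dual_vector'' ℝ y
  have hshift : g + (ε / 2) • f ∈ barrierCone K := by
    refine hball ?_
    rw [Metric.mem_ball, dist_eq_norm, add_sub_cancel_left, norm_smul, Real.norm_of_nonneg]
    · nlinarith [norm_nonneg f]
    · positivity
  have hnonpos := apply_nonpos_of_mem_barrierCone hcone hshift hy
  simp only [add_apply, smul_apply, smul_eq_mul, hfy, RCLike.ofReal_real_eq_id, id_eq] at hnonpos
  linarith

end

theorem neg_of_mem_interior_barrierCone_general
    {V : Type*} [NormedAddCommGroup V] [NormedSpace ℝ V]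
    (K : Set V)
    (hcone : ∀ (c : ℝ), 0 ≤ c → ∀ v ∈ K, c • v ∈ K)
    (g : V →L[ℝ] ℝ)
    (hg : g ∈ interior {h : V →L[ℝ] ℝ | ∃ M : ℝ, ∀ v ∈ K, h v ≤ M}) :
    ∀ y ∈ K, y ≠ 0 → g y < 0 := by
  intro y hy hy0
  obtain ⟨ε, hε, hbound⟩ := exists_apply_le_neg_mul_norm_of_mem_interior_barrierCone hcone hg
  have : 0 < ε * ‖y‖ := mul_pos hε (norm_pos_iff.mpr hy0)
  linarith [hbound y hy]

/-- Proposition 2: if `K` is a nonempty convex cone in a normed space and `g`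
belongs to the interior of the barrier cone of `K`, then `⟨g, y⟩ < 0` for every
`y ∈ K \ {0}`. -/
theorem neg_of_mem_interior_barrierCone
    {V : Type*} [NormedAddCommGroup V] [NormedSpace ℝ V]
    (K : Set V) (hne : K.Nonempty) (hconv : Convex ℝ K)
    (hcone : ∀ (c : ℝ), 0 ≤ c → ∀ v ∈ K, c • v ∈ K)
    (g : V →L[ℝ] ℝ)
    (hg : g ∈ interior {h : V →L[ℝ] ℝ | ∃ M : ℝ, ∀ v ∈ K, h v ≤ M}) :
    ∀ y ∈ K, y ≠ 0 → g y < 0 :=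
  neg_of_mem_interior_barrierCone_general K hcone g hg
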